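/- arXiv:2512.16806 — 4 statements merged into one kernel-verified Lean document; each statement's English description precedes it below -/
import Mathlib

section
/- If υc̃/w > σ/(σ+γ), the steady-state system has exactly one solution: the function g(π) = π - 1/(1 + exp(-βKπ + ρ)) with K = σw - (σ+γ)υc̃ < 0 is strictly increasing on [0,1] with g(0) < 0 and g(1) > 0, hence has a unique zero in (0,1). -/
/-!
Since `K < 0` and `β > 0`, the exponent `-β K π + ρ` increases with `π`, so the logistic term
`1 / (1 + exp (-β K π + ρ))` decreases and `g` is strictly increasing. That term lies in `(0, 1)`,
whence `g 0 < 0 < g 1`; the intermediate value theorem gives a zero in `(0, 1)`, and strict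
monotonicity makes it unique.
-/

open Set

lemma one_div_one_add_exp_pos (t : ℝ) : 0 < 1 / (1 + Real.exp t) := by
  positivity

lemma one_div_one_add_exp_lt_one (t : ℝ) : 1 / (1 + Real.exp t) < 1 :=
  (div_lt_one (by positivity)).mpr (by linarith [Real.exp_pos t])

lemma StrictMono.strictAnti_one_div_one_add_exp {α : Type*} [Preorder α] {φ : α → ℝ}
    (hφ : StrictMono φ) : StrictAnti fun x => 1 / (1 + Real.exp (φ x)) := fun _ _ hxy =>
  one_div_lt_one_div_of_lt (by positivity) (by gcongr; exact hφ hxy)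

lemma StrictMonoOn.existsUnique_eq_zero_of_neg_of_pos {f : ℝ → ℝ} {a b : ℝ} (hab : a ≤ b)
    (hcont : ContinuousOn f (Icc a b)) (hmono : StrictMonoOn f (Icc a b))
    (ha : f a < 0) (hb : 0 < f b) : ∃! x, x ∈ Ioo a b ∧ f x = 0 := by
  obtain ⟨x, hx, hfx⟩ := intermediate_value_Ioo hab hcont ⟨ha, hb⟩
  refine ⟨x, ⟨hx, hfx⟩, fun y ⟨hy, hfy⟩ => ?_⟩
  exact hmono.injOn (Ioo_subset_Icc_self hy) (Ioo_subset_Icc_self hx) (hfy.trans hfx.symm)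

theorem stmt5_general (β ρ K : ℝ)
    (hβ : 0 < β)
    (hKneg : K < 0)
    (g : ℝ → ℝ)
    (hg : g = fun π => π - 1 / (1 + Real.exp (-β * (K * π) + ρ))) :
    StrictMonoOn g (Set.Icc 0 1) ∧ g 0 < 0 ∧ g 1 > 0 ∧
      ∃! π : ℝ, π ∈ Set.Ioo (0 : ℝ) 1 ∧ g π = 0 := by
  subst hg
  have hexponent : StrictMono fun π : ℝ => -β * (K * π) + ρ := fun x y hxy => by
    nlinarith [mul_pos hβ (neg_pos.mpr hKneg)]
  have hmono : StrictMono fun π : ℝ => π - 1 / (1 + Real.exp (-β * (K * π) + ρ)) := by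
    simpa only [sub_eq_add_neg, id] using
      strictMono_id.add_monotone hexponent.strictAnti_one_div_one_add_exp.antitone.neg
  have hcont : Continuous fun π : ℝ => π - 1 / (1 + Real.exp (-β * (K * π) + ρ)) := by
    fun_prop (disch := intro; positivity)
  have hneg : (0 : ℝ) - 1 / (1 + Real.exp (-β * (K * 0) + ρ)) < 0 := by
    linarith [one_div_one_add_exp_pos (-β * (K * 0) + ρ)]
  have hpos : (1 : ℝ) - 1 / (1 + Real.exp (-β * (K * 1) + ρ)) > 0 := by
    linarith [one_div_one_add_exp_lt_one (-β * (K * 1) + ρ)]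
  exact ⟨hmono.strictMonoOn _, hneg, hpos,
    (hmono.strictMonoOn _).existsUnique_eq_zero_of_neg_of_pos zero_le_one hcont.continuousOn
      hneg hpos⟩

/-- strong Veblen case — unique steady state. -/
theorem stmt5 (σ γ w υ ct β ρ K : ℝ)
    (hσ : 0 < σ) (hγ : 0 < γ) (hw : 0 < w) (hυ : 0 < υ) (hct : 0 < ct) (hβ : 0 < β)
    (hK : K = σ * w - (σ + γ) * (υ * ct)) (hKneg : K < 0)
    (hstrong : υ * ct / w > σ / (σ + γ))
    (g : ℝ → ℝ)
    (hg : g = fun π => π - 1 / (1 + Real.exp (-β * (K * π) + ρ))) :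
    StrictMonoOn g (Set.Icc 0 1) ∧ g 0 < 0 ∧ g 1 > 0 ∧
      ∃! π : ℝ, π ∈ Set.Ioo (0 : ℝ) 1 ∧ g π = 0 :=
  stmt5_general β ρ K hβ hKneg g hg
end

section
/- If η < 1 - α, η < (1+α)(1+2π̄), and -(1+η)/π̄ < 1 - α, then both eigenvalues of the Jacobian J (with tr J = π̄/(1+π̄) + α, det J = (απ̄-η)/(1+π̄)) have modulus strictly less than 1. -/
/-! After multiplying by `1 + πbar`, the three hypotheses are exactly the Jury conditions
`0 < 1 - T + D`, `0 < 1 + T + D` and `D < 1` for `z ^ 2 - T z + D`. A real root `x` pairs with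
the real root `T - x`, and `(1 ∓ x) (1 ∓ (T - x)) > 0` together with `x (T - x) = D < 1` keep
both inside `(-1, 1)`; a non-real root pairs with its conjugate, so `‖z‖ ^ 2 = D < 1`. -/

theorem abs_lt_one_of_sq_sub_mul_add_eq_zero {T D x : ℝ} (hA : 0 < 1 - T + D)
    (hB : 0 < 1 + T + D) (hC : D < 1) (hx : x ^ 2 - T * x + D = 0) : |x| < 1 := by
  set y := T - x
  have hxy : x * y = D := by linear_combination -hx
  have hA' : 0 < (1 - x) * (1 - y) := by linear_combination hA + hx
  have hB' : 0 < (1 + x) * (1 + y) := by linear_combination hB + hx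
  rw [abs_lt]
  constructor
  · by_contra! h
    have hy : y < -1 := by nlinarith
    nlinarith
  · by_contra! h
    have hy : 1 < y := by nlinarith
    nlinarith

theorem Complex.norm_lt_one_of_sq_sub_mul_add_eq_zero {T D : ℝ} (hA : 0 < 1 - T + D)
    (hB : 0 < 1 + T + D) (hC : D < 1) {z : ℂ} (hz : z ^ 2 - (T : ℂ) * z + (D : ℂ) = 0) :
    ‖z‖ < 1 := by
  have hre : z.re ^ 2 - z.im ^ 2 - T * z.re + D = 0 := by
    simpa [sq] using congrArg Complex.re hz
  have him : z.im * (2 * z.re - T) = 0 := by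
    have := congrArg Complex.im hz
    simp [sq] at this
    linear_combination this
  rcases mul_eq_zero.mp him with hy | hre_half
  · rw [← Complex.abs_re_eq_norm.mpr hy]
    exact abs_lt_one_of_sq_sub_mul_add_eq_zero hA hB hC (by simpa [hy] using hre)
  · have hnorm : ‖z‖ ^ 2 = D := by
      rw [Complex.sq_norm, Complex.normSq_apply]
      nlinarith
    nlinarith [norm_nonneg z]

theorem stmt12_general (α πbar η : ℝ) (hπ : 0 < πbar)
    (h1 : η < 1 - α) (h2 : η < (1 + α) * (1 + 2 * πbar))
    (h3 : -(1 + η) / πbar < 1 - α)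
    (T D : ℝ) (hT : T = πbar / (1 + πbar) + α) (hD : D = (α * πbar - η) / (1 + πbar)) :
    ∀ z : ℂ, z ^ 2 - (T : ℂ) * z + (D : ℂ) = 0 → ‖z‖ < 1 := by
  have hS : 0 < 1 + πbar := by linarith
  have hA : 1 - T + D = (1 - α - η) / (1 + πbar) := by
    rw [hT, hD]; field_simp; ring
  have hB : 1 + T + D = ((1 + α) * (1 + 2 * πbar) - η) / (1 + πbar) := by
    rw [hT, hD]; field_simp; ring
  have h3' : -(1 + η) < (1 - α) * πbar := (div_lt_iff₀ hπ).mp h3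
  refine fun z hz => Complex.norm_lt_one_of_sq_sub_mul_add_eq_zero ?_ ?_ ?_ hz
  · rw [hA]; exact div_pos (by linarith) hS
  · rw [hB]; exact div_pos (by linarith) hS
  · rw [hD, div_lt_one hS]; linarith

/-- under the three stability conditions, both eigenvalues of the
Jacobian (roots of z² - Tz + D with T = tr J, D = det J) lie inside the unit circle. -/
theorem stmt12 (α πbar η : ℝ) (hα0 : 0 < α) (hα1 : α < 1) (hπ : 0 < πbar)
    (h1 : η < 1 - α) (h2 : η < (1 + α) * (1 + 2 * πbar))
    (h3 : -(1 + η) / πbar < 1 - α)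
    (T D : ℝ) (hT : T = πbar / (1 + πbar) + α) (hD : D = (α * πbar - η) / (1 + πbar)) :
    ∀ z : ℂ, z ^ 2 - (T : ℂ) * z + (D : ℂ) = 0 → ‖z‖ < 1 :=
  stmt12_general α πbar η hπ h1 h2 h3 T D hT hD
end

section
/- Tax neutrality: with consumption tax τ ≥ 0, substituting the tax-adjusted optimal choices c = (σw + e)/((1+π)(γ+σ(1+τ))) + (π/(1+π))υc̃ and m = (γw - (1+τ)e)/((1+π)(γ+σ(1+τ))) + (π/(1+π))(w - υc̃) into e' = e - γc + σm yields e' = (π/(1+π))·[e + σw - (γ+σ)υc̃], independent of τ. -/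
theorem stmt14_general (σ γ π w τ υ ct e c m e' : ℝ)
    (hden : 0 < γ + σ * (1 + τ)) (hπ1 : 0 < 1 + π)
    (hc : c = (σ * w + e) / ((1 + π) * (γ + σ * (1 + τ))) + (π / (1 + π)) * (υ * ct))
    (hm : m = (γ * w - (1 + τ) * e) / ((1 + π) * (γ + σ * (1 + τ))) +
      (π / (1 + π)) * (w - υ * ct))
    (he' : e' = e - γ * c + σ * m) :
    e' = (π / (1 + π)) * (e + σ * w - (γ + σ) * (υ * ct)) := by
  subst hc hm he'
  -- τ drops out because σ (γ w - (1 + τ) e) - γ (σ w + e) = -(γ + σ (1 + τ)) e.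
  field_simp
  ring

/-- tax neutrality of the environmental law of motion. -/
theorem stmt14 (σ γ π w τ υ ct e c m e' : ℝ)
    (hσ : 0 < σ) (hγ : 0 < γ) (hπ : 0 < π) (hw : 0 < w) (hτ : 0 ≤ τ)
    (hυ : 0 ≤ υ) (hct : 0 ≤ ct)
    (hden : 0 < γ + σ * (1 + τ)) (hπ1 : 0 < 1 + π)
    (hc : c = (σ * w + e) / ((1 + π) * (γ + σ * (1 + τ))) + (π / (1 + π)) * (υ * ct))
    (hm : m = (γ * w - (1 + τ) * e) / ((1 + π) * (γ + σ * (1 + τ))) +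
      (π / (1 + π)) * (w - υ * ct))
    (he' : e' = e - γ * c + σ * m) :
    e' = (π / (1 + π)) * (e + σ * w - (γ + σ) * (υ * ct)) :=
  stmt14_general σ γ π w τ υ ct e c m e' hden hπ1 hc hm he'
end

section
/- In the strong Veblen unique-equilibrium case, increasing ρ strictly decreases the steady-state value π̄: if π̄₁ and π̄₂ are the unique solutions of π = 1/(1+exp(-βKπ + ρᵢ)) with K < 0 for ρ₁ < ρ₂, then π̄₂ < π̄₁. -/
/-!
Writing `1 / (1 + exp t) = sigmoid (-t)`, the steady state `π̄ᵢ` is a fixed point of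
`p ↦ sigmoid (β K p - ρᵢ)`. Since `β K < 0` these maps are antitone, and raising `ρ` lowers them
pointwise; an antitone map lying below another has the smaller fixed point.
-/

open Real Function

lemma one_div_one_add_exp_eq_sigmoid (t : ℝ) : 1 / (1 + exp t) = sigmoid (-t) := by
  rw [sigmoid_def, neg_neg, one_div]

theorem Function.IsFixedPt.lt_of_antitone {α : Type*} [LinearOrder α] {f g : α → α} {x y : α}
    (hx : IsFixedPt f x) (hy : IsFixedPt g y) (hg : Antitone g) (hgf : g x < f x) : y < x := by
  by_contra! hxy
  have hyx : y < x := calc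
    y = g y := hy.symm
    _ ≤ g x := hg hxy
    _ < f x := hgf
    _ = x := hx
  exact hyx.not_ge hxy

/-- in the strong Veblen case, a higher materialistic trend ρ
strictly lowers the steady-state green preference. -/
theorem stmt18 (β K ρ₁ ρ₂ π₁ π₂ : ℝ)
    (hβ : 0 < β) (hK : K < 0) (hρ : ρ₁ < ρ₂)
    (h1 : π₁ = 1 / (1 + Real.exp (-β * (K * π₁) + ρ₁)))
    (h2 : π₂ = 1 / (1 + Real.exp (-β * (K * π₂) + ρ₂))) :
    π₂ < π₁ := by
  have hβK : β * K ≤ 0 := (mul_neg_of_pos_of_neg hβ hK).le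
  have hfix (r x : ℝ) (h : x = 1 / (1 + exp (-β * (K * x) + r))) :
      IsFixedPt (fun p ↦ sigmoid (β * K * p - r)) x := by
    rwa [one_div_one_add_exp_eq_sigmoid, show -(-β * (K * x) + r) = β * K * x - r by ring,
      eq_comm] at h
  refine (hfix ρ₁ π₁ h1).lt_of_antitone (hfix ρ₂ π₂ h2) (fun p q hpq ↦ ?_) ?_
  · exact sigmoid_le (by nlinarith)
  · exact sigmoid_lt (by linarith)
end
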